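/- Let d ≥ 4 and let 𝕊_{d,3} be the space of symmetric real d×d matrices with zero diagonal and all row sums zero. If T : 𝕊_{d,3} → 𝕊_{d,3} is a linear map satisfying T(P_σ W P_σᵀ) = P_σ T(W) P_σᵀ for all σ ∈ S_d and all W ∈ 𝕊_{d,3}, then T is a scalar multiple of the identity. -/

import Mathlib

open Matrix

/-- The permutation matrix of `σ`. -/
def permMat {d : ℕ} (σ : Equiv.Perm (Fin d)) : Matrix (Fin d) (Fin d) ℝ :=
  Matrix.of fun i j => if σ j = i then (1 : ℝ) else 0

/-- `𝕊_{d,3}`: symmetric matrices with zero diagonal and all row sums zero. -/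
def Sd3 (d : ℕ) : Submodule ℝ (Matrix (Fin d) (Fin d) ℝ) where
  carrier := {A | Aᵀ = A ∧ (∀ i, A i i = 0) ∧ ∀ i, ∑ j, A i j = 0}
  zero_mem' := ⟨by simp, fun i => rfl, by simp⟩
  add_mem' := by
    rintro a b ⟨ha1, ha2, ha3⟩ ⟨hb1, hb2, hb3⟩
    refine ⟨by rw [Matrix.transpose_add, ha1, hb1], fun i => ?_, fun i => ?_⟩
    · simp [Matrix.add_apply, ha2 i, hb2 i]
    · simp [Matrix.add_apply, Finset.sum_add_distrib, ha3 i, hb3 i]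
  smul_mem' := by
    rintro c a ⟨ha1, ha2, ha3⟩
    refine ⟨by rw [Matrix.transpose_smul, ha1], fun i => ?_, fun i => ?_⟩
    · simp [Matrix.smul_apply, ha2 i]
    · simp [Matrix.smul_apply, ← Finset.mul_sum, ha3 i]

/-!
Fix indices `a ≠ b`. The functional `W ↦ (T W) a b` on `𝕊_{d,3}` is invariant under the
permutations fixing `a` and `b`. Extending it to all matrices and averaging over that stabiliser
writes it as `A ↦ ∑ k l, A k l * c k l` with `c` constant on the stabiliser's orbits of index pairs.
Outside the block `{a, b} × {a, b}` such a `c` has the form `x k + y l`, which pairs to zero with a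
matrix whose row and column sums vanish; hence `(T W) a b = κ * W a b`. Here `d ≥ 4` supplies the
pair of indices outside `{a, b}` on which the orbit values are read off. Finally, `S_d` acts
transitively on ordered pairs of distinct indices, so the same `κ` works for every entry.
-/

open Equiv Finset

theorem LinearMap.apply_eq_sum_mul_single {R m n : Type*} [CommSemiring R] [Fintype m]
    [Fintype n] [DecidableEq m] [DecidableEq n] (φ : Matrix m n R →ₗ[R] R) (A : Matrix m n R) :
    φ A = ∑ i, ∑ j, A i j * φ (Matrix.single i j 1) := by
  conv_lhs => rw [A.matrix_eq_sum_single]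
  simp only [map_sum]
  refine sum_congr rfl fun i _ => sum_congr rfl fun j _ => ?_
  rw [← smul_eq_mul, ← map_smul, smul_single, smul_eq_mul, mul_one]

theorem Equiv.Perm.exists_fix_pair_map_pair {α : Type*} [Finite α] [DecidableEq α]
    {a b m n k l : α} (hab : a ≠ b) (hmn : m ≠ n) (hkl : k ≠ l)
    (hm : m ∉ ({a, b} : Finset α)) (hn : n ∉ ({a, b} : Finset α))
    (hk : k ∉ ({a, b} : Finset α)) (hl : l ∉ ({a, b} : Finset α)) :
    ∃ σ : Perm α, σ a = a ∧ σ b = b ∧ σ m = k ∧ σ n = l := by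
  simp only [mem_insert, mem_singleton, not_or] at hm hn hk hl
  obtain ⟨σ, hσ⟩ := Perm.exists_extending_pair ![a, b, m, n] ![a, b, k, l]
    (by simp [Function.Injective, Fin.forall_fin_succ, *]; grind)
    (by simp [Function.Injective, Fin.forall_fin_succ, *]; grind)
  exact ⟨σ, hσ 0, hσ 1, hσ 2, hσ 3⟩

variable {d : ℕ}

theorem permMat_mul_mul_transpose (σ : Perm (Fin d)) (A : Matrix (Fin d) (Fin d) ℝ) :
    permMat σ * A * (permMat σ)ᵀ = A.submatrix σ.symm σ.symm := by
  have h : permMat σ = σ.symm.toPEquiv.toMatrix := by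
    ext i j
    simp [permMat, PEquiv.toMatrix_apply, Equiv.eq_symm_apply, eq_comm]
  rw [h, ← PEquiv.toMatrix_symm, ← Equiv.toPEquiv_symm, σ.symm_symm,
    PEquiv.toMatrix_toPEquiv_mul, PEquiv.mul_toMatrix_toPEquiv]
  rfl

namespace Sd3

section Entries

variable {A : Matrix (Fin d) (Fin d) ℝ}

theorem apply_comm (hA : A ∈ Sd3 d) (i j : Fin d) : A j i = A i j :=
  congrFun (congrFun hA.1 i) j

theorem apply_self (hA : A ∈ Sd3 d) (i : Fin d) : A i i = 0 := hA.2.1 i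

theorem sum_row (hA : A ∈ Sd3 d) (i : Fin d) : ∑ j, A i j = 0 := hA.2.2 i

theorem sum_col (hA : A ∈ Sd3 d) (j : Fin d) : ∑ i, A i j = 0 := by
  simpa only [apply_comm hA j] using sum_row hA j

theorem submatrix_mem (hA : A ∈ Sd3 d) (σ : Perm (Fin d)) : A.submatrix σ σ ∈ Sd3 d := by
  refine ⟨?_, fun i => apply_self hA (σ i), fun i => ?_⟩
  · ext i j
    exact apply_comm hA (σ i) (σ j)
  · simpa using (Equiv.sum_comp σ (A (σ i))).trans (sum_row hA (σ i))

theorem sum_mul_eq_of_forall_ne (hA : A ∈ Sd3 d) {c : Fin d → Fin d → ℝ} (x y : Fin d → ℝ)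
    (z : Fin d → Fin d → ℝ)
    (hc : ∀ k l, k ≠ l → c k l = x k + y l + z k l) :
    ∑ k, ∑ l, A k l * c k l = ∑ k, ∑ l, A k l * z k l := by
  have hterm : ∀ k l, A k l * c k l = x k * A k l + y l * A k l + A k l * z k l := by
    intro k l
    rcases eq_or_ne k l with rfl | hkl
    · simp [apply_self hA]
    · rw [hc k l hkl]; ring
  have hx : ∑ k, ∑ l, x k * A k l = 0 := by
    simp [← mul_sum, sum_row hA]
  have hy : ∑ k, ∑ l, y l * A k l = 0 := by
    rw [sum_comm]; simp [← mul_sum, sum_col hA]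
  simp only [hterm, sum_add_distrib, hx, hy, zero_add]

end Entries

theorem exists_sum_mul_eq_of_invariant {a b m n : Fin d} (hab : a ≠ b) (hmn : m ≠ n)
    (hm : m ∉ ({a, b} : Finset (Fin d))) (hn : n ∉ ({a, b} : Finset (Fin d)))
    (c : Fin d → Fin d → ℝ)
    (hc : ∀ σ : Perm (Fin d), σ a = a → σ b = b → ∀ k l, c (σ k) (σ l) = c k l) :
    ∃ κ : ℝ, ∀ A ∈ Sd3 d, ∑ k, ∑ l, A k l * c k l = κ * A a b := by
  set s : Finset (Fin d) := {a, b}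
  have hswap : ∀ {p q k}, p ∉ s → q ∉ s → k ∈ s → swap p q k = k := fun hp hq hk =>
    swap_apply_of_ne_of_ne (fun h => hp (h ▸ hk)) (fun h => hq (h ▸ hk))
  have hleft : ∀ k ∈ s, ∀ l ∉ s, c k l = c k m := fun k hk l hl => by
    simpa [hswap hm hl hk] using
      hc (swap m l) (hswap hm hl (by simp [s])) (hswap hm hl (by simp [s])) k m
  have hright : ∀ k ∉ s, ∀ l ∈ s, c k l = c m l := fun k hk l hl => by
    simpa [hswap hm hk hl] using
      hc (swap m k) (hswap hm hk (by simp [s])) (hswap hm hk (by simp [s])) m l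
  have hfar : ∀ k ∉ s, ∀ l ∉ s, k ≠ l → c k l = c m n := fun k hk l hl hkl => by
    obtain ⟨σ, hσa, hσb, hσm, hσn⟩ := Perm.exists_fix_pair_map_pair hab hmn hkl hm hn hk hl
    simpa [hσm, hσn] using hc σ hσa hσb m n
  set w : Fin d → Fin d → ℝ := fun k l => c k l - c k m - c m l + c m n
  refine ⟨w a b + w b a, fun A hA => ?_⟩
  rw [sum_mul_eq_of_forall_ne hA (fun k => if k ∈ s then c k m - c m n else 0)
    (fun l => if l ∈ s then c m l else c m n) (fun k l => if k ∈ s ∧ l ∈ s then w k l else 0)]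
  · simp only [ite_and, mul_ite, mul_zero, sum_ite_irrel, sum_const_zero, sum_ite_mem,
      univ_inter, s, sum_pair hab, apply_self hA, apply_comm hA a b]
    ring
  · intro k l hkl
    by_cases hk : k ∈ s <;> by_cases hl : l ∈ s <;> simp [hk, hl, hleft, hright, hfar, hkl, w]
    ring

theorem exists_apply_eq_mul_of_invariant {a b m n : Fin d} (hab : a ≠ b) (hmn : m ≠ n)
    (hm : m ∉ ({a, b} : Finset (Fin d))) (hn : n ∉ ({a, b} : Finset (Fin d)))
    (ψ : Matrix (Fin d) (Fin d) ℝ →ₗ[ℝ] ℝ)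
    (hψ : ∀ σ : Perm (Fin d), σ a = a → σ b = b →
      ∀ A ∈ Sd3 d, ψ (A.submatrix σ σ) = ψ A) :
    ∃ κ : ℝ, ∀ A ∈ Sd3 d, ψ A = κ * A a b := by
  set H := univ.filter fun σ : Perm (Fin d) => σ a = a ∧ σ b = b
  set c : Fin d → Fin d → ℝ := fun k l => ∑ σ ∈ H, ψ (single (σ k) (σ l) 1)
  have hc : ∀ τ : Perm (Fin d), τ a = a → τ b = b → ∀ k l, c (τ k) (τ l) = c k l := by
    intro τ ha hb k l
    exact sum_equiv (Equiv.mulRight τ) (by simp [H, ha, hb]) (by simp)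
  obtain ⟨κ, hκ⟩ := exists_sum_mul_eq_of_invariant hab hmn hm hn c hc
  have hH : (0 : ℝ) < #H := by exact_mod_cast card_pos.2 ⟨1, by simp [H]⟩
  refine ⟨κ / #H, fun A hA => ?_⟩
  have hsum : ∑ k, ∑ l, A k l * c k l = #H * ψ A := by
    calc ∑ k, ∑ l, A k l * c k l
        = ∑ σ ∈ H, ∑ k, ∑ l, A k l * ψ (single (σ k) (σ l) 1) := by
          simp only [c, mul_sum]
          exact (sum_congr rfl fun _ _ => sum_comm).trans sum_comm
      _ = ∑ σ ∈ H, ψ (A.submatrix σ.symm σ.symm) := sum_congr rfl fun σ _ => by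
          simpa using (ψ.comp (reindexLinearEquiv ℝ ℝ σ σ :
            Matrix (Fin d) (Fin d) ℝ ≃ₗ[ℝ] _).toLinearMap).apply_eq_sum_mul_single A |>.symm
      _ = ∑ σ ∈ H, ψ A := sum_congr rfl fun σ hσ => by
          simp only [H, mem_filter] at hσ
          exact hψ σ.symm (σ.symm_apply_eq.2 hσ.2.1.symm) (σ.symm_apply_eq.2 hσ.2.2.symm) A hA
      _ = #H * ψ A := by simp
  rw [div_mul_eq_mul_div, eq_div_iff hH.ne', ← hκ A hA, hsum, mul_comm]

section Equivariant

variable {T : Sd3 d →ₗ[ℝ] Sd3 d}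
  (hT : ∀ (σ : Perm (Fin d)) (W V : Sd3 d),
    (V : Matrix _ _ ℝ) = (W : Matrix _ _ ℝ).submatrix σ σ →
    (T V : Matrix _ _ ℝ) = (T W : Matrix _ _ ℝ).submatrix σ σ)
include hT

theorem exists_apply_eq_mul {a b m n : Fin d} (hab : a ≠ b) (hmn : m ≠ n)
    (hm : m ∉ ({a, b} : Finset (Fin d))) (hn : n ∉ ({a, b} : Finset (Fin d))) :
    ∃ κ : ℝ, ∀ W : Sd3 d, (T W : Matrix _ _ ℝ) a b = κ * (W : Matrix _ _ ℝ) a b := by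
  obtain ⟨ψ, hψ⟩ :=
    LinearMap.exists_extend (entryLinearMap ℝ ℝ a b ∘ₗ (Sd3 d).subtype ∘ₗ T)
  have hψT : ∀ W : Sd3 d, ψ W = (T W : Matrix _ _ ℝ) a b :=
    fun W => LinearMap.congr_fun hψ W
  obtain ⟨κ, hκ⟩ := exists_apply_eq_mul_of_invariant hab hmn hm hn ψ fun σ ha hb A hA => by
    rw [hψT ⟨_, submatrix_mem hA σ⟩, hψT ⟨A, hA⟩, hT σ ⟨A, hA⟩ _ rfl, submatrix_apply, ha,
      hb]
  exact ⟨κ, fun W => (hψT W).symm.trans (hκ W W.2)⟩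

theorem eq_smul_of_apply_eq_mul {a b : Fin d} (hab : a ≠ b) {κ : ℝ}
    (hκ : ∀ W : Sd3 d, (T W : Matrix _ _ ℝ) a b = κ * (W : Matrix _ _ ℝ) a b) (W : Sd3 d) :
    T W = κ • W := by
  ext i j
  rcases eq_or_ne i j with rfl | hij
  · simp [apply_self (T W).2, apply_self W.2]
  obtain ⟨σ, hσ⟩ := Perm.exists_extending_pair ![a, b] ![i, j] (by simpa) (by simpa)
  have hσa : σ a = i := hσ 0
  have hσb : σ b = j := hσ 1
  let V : Sd3 d := ⟨_, submatrix_mem W.2 σ⟩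
  simpa [V, hσa, hσb, hT σ W V rfl] using hκ V

end Equivariant

end Sd3

/-- for `d ≥ 4`, every `S_d`-equivariant linear endomorphism of
`𝕊_{d,3}` (for the diagonal action `W ↦ P_σ W P_σᵀ`) is a scalar multiple of the
identity. -/
theorem equivariant_endomorphism_Sd3_is_scalar (d : ℕ) (hd : 4 ≤ d)
    (T : ↥(Sd3 d) →ₗ[ℝ] ↥(Sd3 d))
    (hT : ∀ (σ : Equiv.Perm (Fin d)) (W V : ↥(Sd3 d)),
      (V : Matrix (Fin d) (Fin d) ℝ) = permMat σ * (W : Matrix (Fin d) (Fin d) ℝ) * (permMat σ)ᵀ →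
      (T V : Matrix (Fin d) (Fin d) ℝ) = permMat σ * (T W : Matrix (Fin d) (Fin d) ℝ) * (permMat σ)ᵀ) :
    ∃ c : ℝ, ∀ W : ↥(Sd3 d), T W = c • W := by
  have hT' : ∀ (σ : Perm (Fin d)) (W V : Sd3 d),
      (V : Matrix _ _ ℝ) = (W : Matrix _ _ ℝ).submatrix σ σ →
      (T V : Matrix _ _ ℝ) = (T W : Matrix _ _ ℝ).submatrix σ σ := by
    intro σ W V hV
    simpa [permMat_mul_mul_transpose] using
      hT σ.symm W V (by simpa [permMat_mul_mul_transpose] using hV)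
  obtain ⟨κ, hκ⟩ := Sd3.exists_apply_eq_mul hT' (a := ⟨0, by omega⟩) (b := ⟨1, by omega⟩)
    (m := ⟨2, by omega⟩) (n := ⟨3, by omega⟩) (by simp) (by simp) (by simp) (by simp)
  exact ⟨κ, Sd3.eq_smul_of_apply_eq_mul hT' (by simp) hκ⟩
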